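/- Corollary 2: the stochastic receding-horizon platoon coordination game G^s_n is an exact potential game and therefore admits at least one pure Nash equilibrium. That is, the function Φ_n(w_n) = Σ_τ Pr(𝛕 = τ | 𝛕^h_n = τ^h_n) Φ_n(w_n, τ), where Φ_n(w_n, τ) = Σ_{t∈ℕ} Σ_{e∈E} r(|C_n(e,t,w_n,τ)|, e) − Σ_i Λ_i(w^i_n) with r(n,e) = Σ_{j=1}^{n} R(j,e), is an exact potential for the conditional expected utilities U^i_n(w^i_n, w^{-i}_n) = Σ_τ Pr(𝛕 = τ | 𝛕^h_n = τ^h_n) U^i_n(w^i_n, w^{-i}_n, τ), and there exists w*_n ∈ W_n with U^i_n(w*^i_n, w*^{-i}_n) ≥ U^i_n(w^i_n, w*^{-i}_n) for all i and all w^i_n ∈ W^i_n. -/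
import Mathlib


open scoped BigOperators

/-- Departure time of a vehicle from its `(k+1)`-st node (`0`-indexed `k`):
`d 0 = t0 + w 0`, `d (k+1) = d k + tt (path k) (d k) + w (k+1)`. -/
def depart {E : Type*} (tt : E → ℕ → ℕ) (t0 : ℕ) (path : ℕ → E) (w : ℕ → ℕ) : ℕ → ℕ
  | 0 => t0 + w 0
  | k + 1 => depart tt t0 path w k + tt (path k) (depart tt t0 path w k) + w (k + 1)

/-- The platoon set `C(e,t,w,τ)`: vehicles entering edge `e` at time instance `t`. -/
def platoon {E ι : Type*} (len : ι → ℕ) (path : ι → ℕ → E)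
    (tt : E → ℕ → ℕ) (t0 : ι → ℕ) (w : ι → ℕ → ℕ) (e : E) (t : ℕ) : Set ι :=
  {j | ∃ k < len j, path j k = e ∧ depart tt (t0 j) (path j) (w j) k = t}

/-- Vehicle `i`'s utility: total platooning reward along its path minus waiting cost. -/
noncomputable def utility {E ι : Type*} (len : ι → ℕ) (path : ι → ℕ → E)
    (tt : E → ℕ → ℕ) (t0 : ι → ℕ) (R : ℕ → E → ℝ) (Λ : ι → (ℕ → ℕ) → ℝ)
    (w : ι → ℕ → ℕ) (i : ι) : ℝ :=
  (∑ k ∈ Finset.range (len i),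
      R ((platoon len path tt t0 w (path i k)
            (depart tt (t0 i) (path i) (w i) k)).ncard) (path i k))
    - Λ i (w i)

/-- `r(n,e) = ∑_{j=1}^{n} R(j,e)`; in particular `r(0,e) = 0`. -/
noncomputable def rsum {E : Type*} (R : ℕ → E → ℝ) (n : ℕ) (e : E) : ℝ :=
  ∑ j ∈ Finset.Icc 1 n, R j e

/-- The candidate potential
`Φ(w,τ) = ∑_{t∈ℕ} ∑_{e∈E} r(|C(e,t,w,τ)|,e) - ∑_i Λ_i(wⁱ)`. -/
noncomputable def potential {E ι : Type*} [Fintype E] [Fintype ι]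
    (len : ι → ℕ) (path : ι → ℕ → E) (tt : E → ℕ → ℕ) (t0 : ι → ℕ)
    (R : ℕ → E → ℝ) (Λ : ι → (ℕ → ℕ) → ℝ) (w : ι → ℕ → ℕ) : ℝ :=
  (∑' t : ℕ, ∑ e : E, rsum R ((platoon len path tt t0 w e t).ncard) e)
    - ∑ i : ι, Λ i (w i)

/-!
Stochastic receding-horizon instantiation at a decision-making instance `tstar`:
the travel times and the residual times until the next node are jointly random;
the finitely many realizations consistent with the observed history are indexed by
a finite type `T`, realization `τ` having conditional probability `p τ` and giving
travel times `tt τ` and residual times `ρ τ`.  Under realization `τ` the departure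
times over the horizon are `d 0 = tstar + ρ τ i + w i 0` and
`d (l+1) = d l + τ(edge i l, d l) + w i (l+1)`, i.e. `depart` with start time
`tstar + ρ τ i` and path length `H`; the horizon platoon sets, realized utilities
and realized potentials are the corresponding instances of `platoon`, `utility`
and `potential`. -/

section Aux

variable {E ι : Type*} [Fintype E] [Fintype ι]

set_option linter.unusedSectionVars false

lemma depart_strictMono (tt : E → ℕ → ℕ) (htt : ∀ e t, 0 < tt e t)
    (t0 : ℕ) (path : ℕ → E) (w : ℕ → ℕ) :
    StrictMono (depart tt t0 path w) := by
  apply strictMono_nat_of_lt_succ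
  intro k
  have := htt (path k) (depart tt t0 path w k)
  simp only [depart]
  omega

open Classical in
lemma sum_indicator_eq (H : ℕ) (path : ι → ℕ → E) (tt : E → ℕ → ℕ)
    (htt : ∀ e t, 0 < tt e t) (t0 : ι → ℕ) (R : ℕ → E → ℝ)
    (w : ι → ℕ → ℕ) (i : ι) (N : ℕ)
    (hN : ∀ k < H, depart tt (t0 i) (path i) (w i) k < N) :
    ∑ t ∈ Finset.range N, ∑ e : E,
      (if i ∈ platoon (fun _ => H) path tt t0 w e t
        then R ((platoon (fun _ => H) path tt t0 w e t).ncard) e else 0)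
    = ∑ k ∈ Finset.range H,
        R ((platoon (fun _ => H) path tt t0 w (path i k)
              (depart tt (t0 i) (path i) (w i) k)).ncard) (path i k) := by
  set φ : ℕ → ℕ × E := fun k => (depart tt (t0 i) (path i) (w i) k, path i k) with hφ
  set f : ℕ × E → ℝ := fun q =>
    if i ∈ platoon (fun _ => H) path tt t0 w q.2 q.1
      then R ((platoon (fun _ => H) path tt t0 w q.2 q.1).ncard) q.2 else 0 with hf
  have hmono := depart_strictMono tt htt (t0 i) (path i) (w i)
  have hinj : ∀ x ∈ Finset.range H, ∀ y ∈ Finset.range H, φ x = φ y → x = y := by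
    intro x _ y _ hxy
    exact hmono.injective (congrArg Prod.fst hxy)
  have hsub : (Finset.range H).image φ ⊆ Finset.range N ×ˢ Finset.univ := by
    intro q hq
    simp only [Finset.mem_image, Finset.mem_range] at hq
    obtain ⟨k, hk, rfl⟩ := hq
    simp only [Finset.mem_product, Finset.mem_range, Finset.mem_univ, and_true]
    exact hN k hk
  have hzero : ∀ q ∈ Finset.range N ×ˢ Finset.univ,
      q ∉ (Finset.range H).image φ → f q = 0 := by
    intro q _ hq
    simp only [hf]
    rw [if_neg]
    intro hi
    obtain ⟨k, hk, hpk, hdk⟩ := hi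
    exact hq (Finset.mem_image.mpr ⟨k, Finset.mem_range.mpr hk, by
      simp [hφ, hpk, hdk]⟩)
  calc ∑ t ∈ Finset.range N, ∑ e : E,
        (if i ∈ platoon (fun _ => H) path tt t0 w e t
          then R ((platoon (fun _ => H) path tt t0 w e t).ncard) e else 0)
      = ∑ q ∈ Finset.range N ×ˢ Finset.univ, f q := by
        rw [Finset.sum_product]
    _ = ∑ q ∈ (Finset.range H).image φ, f q :=
        (Finset.sum_subset hsub hzero).symm
    _ = ∑ k ∈ Finset.range H, f (φ k) := Finset.sum_image hinj
    _ = _ := by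
        refine Finset.sum_congr rfl fun k hk => ?_
        rw [Finset.mem_range] at hk
        simp only [hf, hφ]
        rw [if_pos ⟨k, hk, rfl, rfl⟩]

open Classical in
lemma tsum_decomp (H : ℕ) (path : ι → ℕ → E) (tt : E → ℕ → ℕ)
    (htt : ∀ e t, 0 < tt e t) (t0 : ι → ℕ) (R : ℕ → E → ℝ)
    (w : ι → ℕ → ℕ) (i : ι) :
    ∑' t : ℕ, ∑ e : E, rsum R ((platoon (fun _ => H) path tt t0 w e t).ncard) e
    = (∑' t : ℕ, ∑ e : E,
        rsum R ((platoon (fun _ => H) path tt t0 w e t \ {i}).ncard) e)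
      + ∑ k ∈ Finset.range H,
          R ((platoon (fun _ => H) path tt t0 w (path i k)
                (depart tt (t0 i) (path i) (w i) k)).ncard) (path i k) := by
  set N := 1 + Finset.sup Finset.univ (fun j => Finset.sup (Finset.range H)
      (fun k => depart tt (t0 j) (path j) (w j) k)) with hNdef
  have hbound : ∀ j : ι, ∀ k < H, depart tt (t0 j) (path j) (w j) k < N := by
    intro j k hk
    have h1 : depart tt (t0 j) (path j) (w j) k ≤
        Finset.sup (Finset.range H) (fun k => depart tt (t0 j) (path j) (w j) k) :=
      Finset.le_sup (Finset.mem_range.mpr hk)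
    have h2 : Finset.sup (Finset.range H) (fun k => depart tt (t0 j) (path j) (w j) k)
        ≤ Finset.sup Finset.univ (fun j => Finset.sup (Finset.range H)
            (fun k => depart tt (t0 j) (path j) (w j) k)) :=
      Finset.le_sup (f := fun j => Finset.sup (Finset.range H)
        (fun k => depart tt (t0 j) (path j) (w j) k)) (Finset.mem_univ j)
    omega
  have hempty : ∀ t, N ≤ t → ∀ e : E, platoon (fun _ => H) path tt t0 w e t = ∅ := by
    intro t ht e
    ext j
    simp only [platoon, Set.mem_setOf_eq, Set.mem_empty_iff_false, iff_false]
    rintro ⟨k, hk, -, hd⟩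
    have := hbound j k hk
    omega
  have hF0 : ∀ t ∉ Finset.range N,
      (∑ e : E, rsum R ((platoon (fun _ => H) path tt t0 w e t).ncard) e) = 0 := by
    intro t ht
    rw [Finset.mem_range, not_lt] at ht
    refine Finset.sum_eq_zero fun e _ => ?_
    rw [hempty t ht e]
    simp [rsum]
  have hF0' : ∀ t ∉ Finset.range N,
      (∑ e : E, rsum R ((platoon (fun _ => H) path tt t0 w e t \ {i}).ncard) e) = 0 := by
    intro t ht
    rw [Finset.mem_range, not_lt] at ht
    refine Finset.sum_eq_zero fun e _ => ?_
    rw [hempty t ht e]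
    simp [rsum]
  rw [tsum_eq_sum hF0, tsum_eq_sum hF0',
    ← sum_indicator_eq H path tt htt t0 R w i N (hbound i), ← Finset.sum_add_distrib]
  refine Finset.sum_congr rfl fun t _ => ?_
  rw [← Finset.sum_add_distrib]
  refine Finset.sum_congr rfl fun e _ => ?_
  by_cases hi : i ∈ platoon (fun _ => H) path tt t0 w e t
  · rw [if_pos hi]
    have hm : (platoon (fun _ => H) path tt t0 w e t \ {i}).ncard + 1
        = (platoon (fun _ => H) path tt t0 w e t).ncard :=
      Set.ncard_diff_singleton_add_one hi (Set.toFinite _)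
    rw [← hm]
    unfold rsum
    exact Finset.sum_Icc_succ_top (by omega) _
  · rw [if_neg hi, Set.diff_singleton_eq_self hi, add_zero]

lemma platoon_diff_update [DecidableEq ι] (len : ι → ℕ) (path : ι → ℕ → E)
    (tt : E → ℕ → ℕ) (t0 : ι → ℕ) (w : ι → ℕ → ℕ) (i : ι) (wi : ℕ → ℕ)
    (e : E) (t : ℕ) :
    platoon len path tt t0 (Function.update w i wi) e t \ {i}
      = platoon len path tt t0 w e t \ {i} := by
  ext j
  by_cases hj : j = i
  · subst hj; simp
  · simp only [Set.mem_diff, Set.mem_singleton_iff, platoon, Set.mem_setOf_eq,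
      Function.update_of_ne hj]

lemma det_potential [DecidableEq ι] (H : ℕ) (path : ι → ℕ → E)
    (tt : E → ℕ → ℕ) (htt : ∀ e t, 0 < tt e t) (t0 : ι → ℕ)
    (R : ℕ → E → ℝ) (Λ : ι → (ℕ → ℕ) → ℝ)
    (w : ι → ℕ → ℕ) (i : ι) (wi' wi'' : ℕ → ℕ) :
    potential (fun _ => H) path tt t0 R Λ (Function.update w i wi')
      - potential (fun _ => H) path tt t0 R Λ (Function.update w i wi'')
    = utility (fun _ => H) path tt t0 R Λ (Function.update w i wi') i
      - utility (fun _ => H) path tt t0 R Λ (Function.update w i wi'') i := by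
  classical
  unfold potential utility
  rw [tsum_decomp H path tt htt t0 R (Function.update w i wi') i,
    tsum_decomp H path tt htt t0 R (Function.update w i wi'') i]
  have hA : (∑' t : ℕ, ∑ e : E,
        rsum R ((platoon (fun _ => H) path tt t0 (Function.update w i wi') e t \ {i}).ncard) e)
      = (∑' t : ℕ, ∑ e : E,
        rsum R ((platoon (fun _ => H) path tt t0 (Function.update w i wi'') e t \ {i}).ncard) e) := by
    refine tsum_congr fun t => Finset.sum_congr rfl fun e _ => ?_
    rw [platoon_diff_update, platoon_diff_update]
  have hL : (∑ j : ι, Λ j (Function.update w i wi' j))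
      - (∑ j : ι, Λ j (Function.update w i wi'' j)) = Λ i wi' - Λ i wi'' := by
    rw [← Finset.sum_sub_distrib, Finset.sum_eq_single i]
    · simp
    · intro j _ hj
      rw [Function.update_of_ne hj, Function.update_of_ne hj, sub_self]
    · simp
  simp only [Function.update_self]
  linarith [hA, hL]

end Aux

/-- **Corollary 2.**  The stochastic receding-horizon platoon coordination game
`Gˢₙ` is an exact potential game — the conditional expected potential
`Φₙ(w) = ∑_τ Pr(𝛕 = τ ∣ 𝛕ʰₙ = τʰₙ) Φₙ(w,τ)` satisfies the exact potential identity
for the conditional expected utilities — and it therefore admits at least one pure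
Nash equilibrium. -/
theorem stochastic_receding_horizon_game_exact_potential_and_NE
    {E ι T : Type*} [Fintype E] [Fintype ι] [DecidableEq ι] [Fintype T]
    (p : T → ℝ) (hp : ∀ τ, 0 ≤ p τ) (hpsum : ∑ τ : T, p τ = 1)
    (H : ℕ) (tstar : ℕ) (ρ : T → ι → ℕ) (edge : ι → ℕ → E)
    (tt : T → E → ℕ → ℕ) (htt : ∀ τ e t, 0 < tt τ e t)
    (R : ℕ → E → ℝ) (Λ : ι → (ℕ → ℕ) → ℝ)
    (W : ι → Finset (ℕ → ℕ)) (hW : ∀ i, (W i).Nonempty) :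
    (∀ (w : ι → ℕ → ℕ), (∀ j, w j ∈ W j) →
      ∀ (i : ι) (wi' wi'' : ℕ → ℕ), wi' ∈ W i → wi'' ∈ W i →
        (∑ τ : T, p τ * potential (fun _ => H) edge (tt τ) (fun j => tstar + ρ τ j) R Λ
            (Function.update w i wi'))
          - (∑ τ : T, p τ * potential (fun _ => H) edge (tt τ) (fun j => tstar + ρ τ j) R Λ
              (Function.update w i wi''))
        = (∑ τ : T, p τ * utility (fun _ => H) edge (tt τ) (fun j => tstar + ρ τ j) R Λ
              (Function.update w i wi') i)
          - (∑ τ : T, p τ * utility (fun _ => H) edge (tt τ) (fun j => tstar + ρ τ j) R Λ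
              (Function.update w i wi'') i))
    ∧ ∃ wstar : ι → ℕ → ℕ, (∀ j, wstar j ∈ W j) ∧
        ∀ i : ι, ∀ wi ∈ W i,
          (∑ τ : T, p τ * utility (fun _ => H) edge (tt τ) (fun j => tstar + ρ τ j) R Λ
              wstar i)
            ≥ ∑ τ : T, p τ * utility (fun _ => H) edge (tt τ) (fun j => tstar + ρ τ j) R Λ
                (Function.update wstar i wi) i := by

  classical
  have key : ∀ (w : ι → ℕ → ℕ) (i : ι) (wi' wi'' : ℕ → ℕ),
      (∑ τ : T, p τ * potential (fun _ => H) edge (tt τ) (fun j => tstar + ρ τ j) R Λ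
          (Function.update w i wi'))
        - (∑ τ : T, p τ * potential (fun _ => H) edge (tt τ) (fun j => tstar + ρ τ j) R Λ
            (Function.update w i wi''))
      = (∑ τ : T, p τ * utility (fun _ => H) edge (tt τ) (fun j => tstar + ρ τ j) R Λ
            (Function.update w i wi') i)
        - (∑ τ : T, p τ * utility (fun _ => H) edge (tt τ) (fun j => tstar + ρ τ j) R Λ
            (Function.update w i wi'') i) := by
    intro w i wi' wi''
    rw [← Finset.sum_sub_distrib, ← Finset.sum_sub_distrib]
    refine Finset.sum_congr rfl fun τ _ => ?_
    rw [← mul_sub, ← mul_sub,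
      det_potential H edge (tt τ) (htt τ) (fun j => tstar + ρ τ j) R Λ w i wi' wi'']
  refine ⟨fun w _ i wi' wi'' _ _ => key w i wi' wi'', ?_⟩
  have hne : (Fintype.piFinset W).Nonempty :=
    ⟨fun i => (hW i).choose, Fintype.mem_piFinset.mpr fun i => (hW i).choose_spec⟩
  obtain ⟨wstar, hmem, hmax⟩ := Finset.exists_max_image (Fintype.piFinset W)
    (fun w => ∑ τ : T, p τ * potential (fun _ => H) edge (tt τ)
      (fun j => tstar + ρ τ j) R Λ w) hne
  refine ⟨wstar, fun j => Fintype.mem_piFinset.mp hmem j, ?_⟩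
  intro i wi hwi
  have hupd : Function.update wstar i wi ∈ Fintype.piFinset W := by
    rw [Fintype.mem_piFinset]
    intro j
    by_cases hj : j = i
    · subst hj; simpa
    · rw [Function.update_of_ne hj]; exact Fintype.mem_piFinset.mp hmem j
  have h1 := hmax _ hupd
  have h2 := key wstar i (wstar i) wi
  rw [Function.update_eq_self] at h2
  simp only at h1 h2 ⊢
  linarith
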